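/- (Reconstructor stability.) Let D and D̃ be dictionaries with ‖D − D̃‖_{1,2} ≤ λ, let a* be a minimizer of the LASSO objective for D at x and ã* a minimizer of the LASSO objective for D̃ at x. Then ‖D a* − D ã*‖_2² ≤ 2 ( 3‖x‖_2² + 9‖x‖_2 + 2 ) ‖x‖_2² · ‖D − D̃‖_{1,2} / λ. -/

import Mathlib

open Finset Matrix

noncomputable def norm2 {ι : Type*} [Fintype ι] (v : ι → ℝ) : ℝ :=
  Real.sqrt (∑ i, v i ^ 2)

noncomputable def norm1 {ι : Type*} [Fintype ι] (v : ι → ℝ) : ℝ :=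
  ∑ i, |v i|

noncomputable def norm0 {ι : Type*} (v : ι → ℝ) : ℕ :=
  Set.ncard {i | v i ≠ 0}

noncomputable def dot {ι : Type*} [Fintype ι] (u v : ι → ℝ) : ℝ :=
  ∑ i, u i * v i

def col {d m : ℕ} (D : Matrix (Fin d) (Fin m) ℝ) (i : Fin m) : Fin d → ℝ :=
  fun r => D r i

def IsDictionary {d m : ℕ} (D : Matrix (Fin d) (Fin m) ℝ) : Prop :=
  ∀ i, norm2 (_root_.col D i) = 1

noncomputable def norm12 {d m : ℕ} (E : Matrix (Fin d) (Fin m) ℝ) : ℝ :=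
  ⨆ i : Fin m, norm2 (_root_.col E i)

noncomputable def lassoObj {d m : ℕ} (lam : ℝ) (D : Matrix (Fin d) (Fin m) ℝ)
    (x : Fin d → ℝ) (z : Fin m → ℝ) : ℝ :=
  (1/2) * (norm2 (x - D.mulVec z))^2 + lam * norm1 z

def IsLassoMin {d m : ℕ} (lam : ℝ) (D : Matrix (Fin d) (Fin m) ℝ)
    (x : Fin d → ℝ) (a : Fin m → ℝ) : Prop :=
  ∀ z, lassoObj lam D x a ≤ lassoObj lam D x z

def Incoherent {d m : ℕ} (mu : ℝ) (D : Matrix (Fin d) (Fin m) ℝ) : Prop :=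
  ∀ i j, i ≠ j → |dot (_root_.col D i) (_root_.col D j)| ≤ mu / Real.sqrt d

noncomputable def kMargin {d m : ℕ} (lam : ℝ) (k : ℕ) (D : Matrix (Fin d) (Fin m) ℝ)
    (x : Fin d → ℝ) (a : Fin m → ℝ) : ℝ :=
  ⨆ I : {I : Finset (Fin m) // I.card = m - k},
    ⨅ j : {j : Fin m // j ∈ I.1}, (lam - |dot (_root_.col D j.1) (x - D.mulVec a)|)

/-!
Let `F` and `F̃` be the LASSO objectives of `D` and `D̃`. Comparing `F a` with `F` at the midpoint of
`a` and `z` (parallelogram law for the residual, convexity of `‖·‖₁`) shows that `F` grows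
quadratically away from its minimiser: `‖D a - D z‖² ≤ 4 (F z - F a)`. Comparing with `z = 0`, every
minimiser has residual at most `‖x‖` and `λ ‖a‖₁ ≤ ‖x‖² / 2`, so at such points `F` and `F̃` differ by
`O(‖D - D̃‖_{1,2} / λ)`. Since `ã` minimises `F̃`, this makes `F ã - F a` small.
-/

section Norms

variable {ι : Type*} [Fintype ι]

lemma norm2_eq_norm_toLp (v : ι → ℝ) : norm2 v = ‖WithLp.toLp 2 v‖ := by
  simp [EuclideanSpace.norm_eq, norm2, sq_abs]

lemma norm1_eq_norm_toLp (v : ι → ℝ) : norm1 v = ‖WithLp.toLp 1 v‖ := by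
  simp [PiLp.norm_eq_of_L1, norm1]

lemma norm2_nonneg (v : ι → ℝ) : 0 ≤ norm2 v :=
  Real.sqrt_nonneg _

lemma norm1_nonneg (v : ι → ℝ) : 0 ≤ norm1 v :=
  Finset.sum_nonneg fun _ _ => abs_nonneg _

lemma sq_norm2 (v : ι → ℝ) : norm2 v ^ 2 = ∑ i, v i ^ 2 :=
  Real.sq_sqrt (Finset.sum_nonneg fun _ _ => sq_nonneg _)

lemma norm2_neg (v : ι → ℝ) : norm2 (-v) = norm2 v := by
  simp [norm2]

lemma norm2_sub_rev (u v : ι → ℝ) : norm2 (u - v) = norm2 (v - u) := by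
  rw [← neg_sub, norm2_neg]

lemma norm2_le_add_norm2_sub (u v : ι → ℝ) : norm2 u ≤ norm2 v + norm2 (u - v) := by
  simpa [norm2_eq_norm_toLp] using norm_le_norm_add_norm_sub' (WithLp.toLp 2 u) (WithLp.toLp 2 v)

lemma norm1_midpoint_le (u v : ι → ℝ) :
    norm1 ((2⁻¹ : ℝ) • (u + v)) ≤ (norm1 u + norm1 v) / 2 := by
  simp only [norm1_eq_norm_toLp, WithLp.toLp_smul, WithLp.toLp_add, norm_smul]
  rw [Real.norm_of_nonneg (by norm_num), inv_mul_eq_div]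
  gcongr
  exact norm_add_le _ _

lemma sq_norm2_midpoint_sub (x u v : ι → ℝ) :
    norm2 (x - (2⁻¹ : ℝ) • (u + v)) ^ 2
      = norm2 (x - u) ^ 2 / 2 + norm2 (x - v) ^ 2 / 2 - norm2 (u - v) ^ 2 / 4 := by
  simp only [sq_norm2, Pi.sub_apply, Pi.smul_apply, Pi.add_apply, smul_eq_mul]
  rw [Finset.sum_div, Finset.sum_div, Finset.sum_div, ← Finset.sum_add_distrib,
    ← Finset.sum_sub_distrib]
  exact Finset.sum_congr rfl fun i _ => by ring

lemma sq_norm2_sub_sq_norm2_le (u v : ι → ℝ) :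
    norm2 u ^ 2 - norm2 v ^ 2 ≤ norm2 (u - v) * (2 * norm2 v + norm2 (u - v)) := by
  nlinarith [norm2_le_add_norm2_sub u v, norm2_nonneg u, norm2_nonneg v, norm2_nonneg (u - v)]

/-- Used with `v` the residual of a LASSO minimiser `z` for `D`, `u` its residual for `D'`,
`N = ‖z‖₁`, `X = ‖x‖` and `ε = ‖D - D'‖_{1,2}`. -/
lemma mul_sq_norm2_sub_sq_norm2_le {lam ε X N : ℝ} {u v : ι → ℝ} (hlam : 0 ≤ lam) (hε : 0 ≤ ε)
    (hεlam : ε ≤ lam) (hN : 0 ≤ N) (hlamN : lam * N ≤ X ^ 2 / 2) (hv : norm2 v ≤ X)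
    (huv : norm2 (u - v) ≤ ε * N) :
    lam * (norm2 u ^ 2 - norm2 v ^ 2) ≤ ε * X ^ 3 + ε * X ^ 4 / 4 := by
  set w := norm2 (u - v)
  have hw : 0 ≤ w := norm2_nonneg _
  have hlamw : lam * w ≤ ε * X ^ 2 / 2 :=
    calc lam * w ≤ lam * (ε * N) := by gcongr
      _ = ε * (lam * N) := by ring
      _ ≤ ε * (X ^ 2 / 2) := by gcongr
      _ = ε * X ^ 2 / 2 := by ring
  have hwX : w ≤ X ^ 2 / 2 :=
    calc w ≤ ε * N := huv
      _ ≤ lam * N := by gcongr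
      _ ≤ X ^ 2 / 2 := hlamN
  calc lam * (norm2 u ^ 2 - norm2 v ^ 2) ≤ lam * (w * (2 * norm2 v + w)) := by
        gcongr; exact sq_norm2_sub_sq_norm2_le u v
    _ = 2 * norm2 v * (lam * w) + w * (lam * w) := by ring
    _ ≤ 2 * X * (ε * X ^ 2 / 2) + X ^ 2 / 2 * (ε * X ^ 2 / 2) := by
        have hX : 0 ≤ X := (norm2_nonneg v).trans hv
        gcongr
    _ = ε * X ^ 3 + ε * X ^ 4 / 4 := by ring

end Norms

section Dictionary

variable {d m : ℕ}

lemma norm2_col_le_norm12 (E : Matrix (Fin d) (Fin m) ℝ) (i : Fin m) :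
    norm2 (_root_.col E i) ≤ norm12 E :=
  le_ciSup (f := fun i => norm2 (_root_.col E i)) (Set.finite_range _).bddAbove i

lemma norm12_nonneg (E : Matrix (Fin d) (Fin m) ℝ) : 0 ≤ norm12 E := by
  rcases isEmpty_or_nonempty (Fin m) with _ | ⟨⟨i⟩⟩
  · simp [norm12]
  · exact (norm2_nonneg _).trans (norm2_col_le_norm12 E i)

lemma norm12_sub_comm (A B : Matrix (Fin d) (Fin m) ℝ) : norm12 (A - B) = norm12 (B - A) := by
  simp only [norm12]
  congr! 2 with i
  exact norm2_sub_rev _ _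

lemma norm2_mulVec_le (E : Matrix (Fin d) (Fin m) ℝ) (z : Fin m → ℝ) :
    norm2 (E *ᵥ z) ≤ norm12 E * norm1 z := by
  have hsum : E *ᵥ z = ∑ j, z j • _root_.col E j := by
    ext r
    simp [Matrix.mulVec, dotProduct, _root_.col, Finset.sum_apply, mul_comm]
  calc norm2 (E *ᵥ z) ≤ ∑ j, |z j| * norm2 (_root_.col E j) := by
        simpa [hsum, norm2_eq_norm_toLp, WithLp.toLp_sum, norm_smul] using
          norm_sum_le Finset.univ fun j => z j • WithLp.toLp 2 (_root_.col E j)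
    _ ≤ ∑ j, |z j| * norm12 E := by
        gcongr with j; exact norm2_col_le_norm12 E j
    _ = norm12 E * norm1 z := by rw [norm1, ← Finset.sum_mul, mul_comm]

end Dictionary

section Lasso

variable {d m : ℕ} {lam : ℝ} {D : Matrix (Fin d) (Fin m) ℝ} {x : Fin d → ℝ} {a : Fin m → ℝ}

lemma lassoObj_zero (lam : ℝ) (D : Matrix (Fin d) (Fin m) ℝ) (x : Fin d → ℝ) :
    lassoObj lam D x 0 = norm2 x ^ 2 / 2 := by
  simp [lassoObj, norm1]
  ring

namespace IsLassoMin

lemma lam_mul_norm1_le (ha : IsLassoMin lam D x a) : lam * norm1 a ≤ norm2 x ^ 2 / 2 := by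
  have h := ha 0
  rw [lassoObj_zero, lassoObj] at h
  linarith [sq_nonneg (norm2 (x - D *ᵥ a))]

lemma norm2_sub_mulVec_le (hlam : 0 ≤ lam) (ha : IsLassoMin lam D x a) :
    norm2 (x - D *ᵥ a) ≤ norm2 x := by
  have h := ha 0
  rw [lassoObj_zero, lassoObj] at h
  have : 0 ≤ lam * norm1 a := mul_nonneg hlam (norm1_nonneg a)
  exact (sq_le_sq₀ (norm2_nonneg _) (norm2_nonneg _)).mp (by linarith)

lemma sq_norm2_mulVec_sub_le (hlam : 0 ≤ lam) (ha : IsLassoMin lam D x a) (z : Fin m → ℝ) :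
    norm2 (D *ᵥ a - D *ᵥ z) ^ 2 ≤ 4 * (lassoObj lam D x z - lassoObj lam D x a) := by
  have hmid := ha ((2⁻¹ : ℝ) • (a + z))
  have hnorm1 := mul_le_mul_of_nonneg_left (norm1_midpoint_le a z) hlam
  simp only [lassoObj, Matrix.mulVec_smul, Matrix.mulVec_add, sq_norm2_midpoint_sub] at hmid ⊢
  linarith

lemma lam_mul_sq_norm2_sub_mulVec_sub_le {D' : Matrix (Fin d) (Fin m) ℝ} (hlam : 0 ≤ lam)
    (hclose : norm12 (D - D') ≤ lam) (ha : IsLassoMin lam D x a) :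
    lam * (norm2 (x - D' *ᵥ a) ^ 2 - norm2 (x - D *ᵥ a) ^ 2)
      ≤ norm12 (D - D') * norm2 x ^ 3 + norm12 (D - D') * norm2 x ^ 4 / 4 := by
  refine mul_sq_norm2_sub_sq_norm2_le hlam (norm12_nonneg _) hclose (norm1_nonneg a)
    ha.lam_mul_norm1_le (ha.norm2_sub_mulVec_le hlam) ?_
  rw [sub_sub_sub_cancel_left, ← Matrix.sub_mulVec]
  exact norm2_mulVec_le _ _

lemma lam_mul_lassoObj_sub_le {D' : Matrix (Fin d) (Fin m) ℝ} {a' : Fin m → ℝ} (hlam : 0 ≤ lam)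
    (hclose : norm12 (D - D') ≤ lam) (ha : IsLassoMin lam D x a) (ha' : IsLassoMin lam D' x a') :
    lam * (lassoObj lam D x a' - lassoObj lam D x a)
      ≤ norm12 (D - D') * norm2 x ^ 3 + norm12 (D - D') * norm2 x ^ 4 / 4 := by
  have ha'_perturb := ha'.lam_mul_sq_norm2_sub_mulVec_sub_le (D' := D) hlam
    (by rwa [norm12_sub_comm])
  rw [norm12_sub_comm] at ha'_perturb
  have ha_perturb := ha.lam_mul_sq_norm2_sub_mulVec_sub_le hlam hclose
  have hopt := mul_le_mul_of_nonneg_left (ha' a) hlam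
  simp only [lassoObj] at hopt ⊢
  linear_combination (ha'_perturb + ha_perturb) / 2 + hopt

end IsLassoMin

end Lasso

theorem reconstructor_stability_general {d m : ℕ} (lam : ℝ) (hlam : 0 < lam)
    (D Dt : Matrix (Fin d) (Fin m) ℝ)
    (hclose : norm12 (D - Dt) ≤ lam) (x : Fin d → ℝ)
    (a at' : Fin m → ℝ) (ha : IsLassoMin lam D x a) (hat : IsLassoMin lam Dt x at') :
    (norm2 (D.mulVec a - D.mulVec at'))^2
      ≤ 2 * (3 * (norm2 x)^2 + 9 * norm2 x + 2) * (norm2 x)^2 * norm12 (D - Dt) / lam := by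
  have hgrowth := mul_le_mul_of_nonneg_left (ha.sq_norm2_mulVec_sub_le hlam.le at') hlam.le
  have hnear := ha.lam_mul_lassoObj_sub_le hlam.le hclose hat
  have hε := norm12_nonneg (D - Dt)
  have hX := norm2_nonneg x
  rw [le_div_iff₀ hlam]
  calc norm2 (D *ᵥ a - D *ᵥ at') ^ 2 * lam
      ≤ 4 * (lam * (lassoObj lam D x at' - lassoObj lam D x a)) := by linarith
    _ ≤ 4 * (norm12 (D - Dt) * norm2 x ^ 3 + norm12 (D - Dt) * norm2 x ^ 4 / 4) := by gcongr
    _ ≤ 2 * (3 * norm2 x ^ 2 + 9 * norm2 x + 2) * norm2 x ^ 2 * norm12 (D - Dt) := by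
        nlinarith [mul_nonneg hε (pow_nonneg hX 2), mul_nonneg hε (pow_nonneg hX 3),
          mul_nonneg hε (pow_nonneg hX 4)]

/-- Reconstructor stability. -/
theorem reconstructor_stability {d m : ℕ} (lam : ℝ) (hlam : 0 < lam)
    (D Dt : Matrix (Fin d) (Fin m) ℝ) (hD : IsDictionary D) (hDt : IsDictionary Dt)
    (hclose : norm12 (D - Dt) ≤ lam) (x : Fin d → ℝ)
    (a at' : Fin m → ℝ) (ha : IsLassoMin lam D x a) (hat : IsLassoMin lam Dt x at') :
    (norm2 (D.mulVec a - D.mulVec at'))^2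
      ≤ 2 * (3 * (norm2 x)^2 + 9 * norm2 x + 2) * (norm2 x)^2 * norm12 (D - Dt) / lam :=
  reconstructor_stability_general lam hlam D Dt hclose x a at' ha hat
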